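/- For every integer n ≥ 2 and every real number x, 𝔠_n(x) = 2x²·𝔠_{n−2}(x) + (x/4 + 4x³)·𝔠'_{n−2}(x) + (x²/4 + x⁴)·𝔠''_{n−2}(x), where 𝔠'_{m} and 𝔠''_{m} denote the first and second derivatives of the polynomial function x ↦ 𝔠_m(x). -/

import Mathlib

/-!
Up to the factor `k!`, `T(n, k)` is the `k`-th forward difference of `t ↦ tⁿ` at `-k/2`.
Commuting multiplication by `t` past the forward difference operator twice, and writing
`tⁿ⁺² = t · (t · tⁿ)`, gives the triangular recurrence
`(k+2)! T(n+2, k+2) = (k+2)²/4 · (k+2)! T(n, k+2) + (k+2)(k+1) · k! T(n, k)`.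
For the Euler operator `θ = x d/dx`, which acts on `xᵏ` as multiplication by `k`,
this says `𝔠ₙ₊₂ = ¼ θ²𝔠ₙ + (θ² - θ)(x² 𝔠ₙ)`; expanding `θ` gives the differential recurrence.
-/

open Nat Finset

/-- Central factorial numbers of the second kind. -/
noncomputable def centralT (n k : ℕ) : ℝ :=
  (1 / (k ! : ℝ)) * ∑ j ∈ Finset.range (k + 1),
    (-1 : ℝ) ^ j * (k.choose j : ℝ) * ((k : ℝ) / 2 - (j : ℝ)) ^ n

/-- Central Fubini-like polynomials. -/
noncomputable def centralFubini (n : ℕ) (x : ℝ) : ℝ :=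
  ∑ k ∈ Finset.range (n + 1), (k ! : ℝ) * centralT n k * x ^ k

open fwdDiff Polynomial

section fwdDiff

variable {R : Type*} [CommRing R]

theorem fwdDiff_iter_succ_id_mul (g : R → R) (n : ℕ) (y : R) :
    (Δ_[1])^[n + 1] (fun t ↦ t * g t) y =
      (y + (n + 1)) * (Δ_[1])^[n + 1] g y + (n + 1) * (Δ_[1])^[n] g y := by
  induction n generalizing y with
  | zero =>
    simp only [zero_add, Function.iterate_one, Function.iterate_zero, id_eq, fwdDiff]
    push_cast
    ring
  | succ n ih =>
    have hstep (z : R) :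
        (Δ_[1])^[n + 2] g z = (Δ_[1])^[n + 1] g (z + 1) - (Δ_[1])^[n + 1] g z := by
      rw [Function.iterate_succ_apply']
      rfl
    rw [Function.iterate_succ_apply', fwdDiff, ih, ih, hstep, Function.iterate_succ_apply' _ n]
    simp only [fwdDiff]
    push_cast
    ring

theorem fwdDiff_iter_add_two_sq_mul (g : R → R) (k : ℕ) (y : R) :
    (Δ_[1])^[k + 2] (fun t ↦ t ^ 2 * g t) y =
      (y + (k + 2)) ^ 2 * (Δ_[1])^[k + 2] g y
        + (k + 2) * (2 * y + 2 * k + 3) * (Δ_[1])^[k + 1] g y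
        + (k + 2) * (k + 1) * (Δ_[1])^[k] g y := by
  have h := fwdDiff_iter_succ_id_mul (fun t ↦ t * g t) (k + 1) y
  simp only [← mul_assoc, ← sq] at h
  rw [h, fwdDiff_iter_succ_id_mul, fwdDiff_iter_succ_id_mul]
  push_cast
  ring

end fwdDiff

theorem factorial_mul_centralT (n k : ℕ) :
    (k ! : ℝ) * centralT n k = (Δ_[1])^[k] (fun t : ℝ ↦ t ^ n) (-(k / 2)) := by
  rw [centralT, ← mul_assoc, mul_one_div_cancel (by positivity), one_mul,
    fwdDiff_iter_eq_sum_shift, ← sum_range_reflect]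
  refine sum_congr rfl fun j hj ↦ ?_
  have hjk : j ≤ k := Nat.lt_succ_iff.mp (mem_range.mp hj)
  rw [Nat.add_sub_cancel, Nat.choose_symm hjk, nsmul_one, Nat.cast_sub hjk, zsmul_eq_mul]
  push_cast
  ring

theorem centralT_eq_zero_of_lt {n k : ℕ} (h : n < k) : centralT n k = 0 := by
  rw [← mul_right_inj' (by positivity : (k ! : ℝ) ≠ 0), factorial_mul_centralT,
    fwdDiff_iter_pow_eq_zero_of_lt h, mul_zero, Pi.zero_apply]

theorem centralT_succ_zero (n : ℕ) : centralT (n + 1) 0 = 0 := by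
  simp [centralT]

theorem centralT_add_two_one (n : ℕ) : centralT (n + 2) 1 = centralT n 1 / 4 := by
  simp only [centralT, sum_range_succ, sum_range_zero]
  norm_num
  ring

theorem factorial_mul_centralT_add_two (n k : ℕ) :
    ((k + 2)! : ℝ) * centralT (n + 2) (k + 2) =
      (k + 2) ^ 2 / 4 * ((k + 2)! * centralT n (k + 2))
        + (k + 2) * (k + 1) * (k ! * centralT n k) := by
  have hpow : (fun t : ℝ ↦ t ^ (n + 2)) = fun t ↦ t ^ 2 * t ^ n := by
    funext t
    ring
  have hshift (g : ℝ → ℝ) : (Δ_[1])^[k + 1] g (-((k + 2 : ℕ) / 2)) =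
      (Δ_[1])^[k] g (-(k / 2)) - (Δ_[1])^[k] g (-((k + 2 : ℕ) / 2)) := by
    have hy : -(((k + 2 : ℕ) : ℝ) / 2) + 1 = -(k / 2) := by
      push_cast
      ring
    rw [Function.iterate_succ_apply', fwdDiff, hy]
  simp only [factorial_mul_centralT, hpow, fwdDiff_iter_add_two_sq_mul, hshift]
  push_cast
  ring

theorem Polynomial.coeff_X_mul_derivative {R : Type*} [Semiring R] (p : R[X]) (n : ℕ) :
    (X * derivative p).coeff n = p.coeff n * n := by
  cases n with
  | zero => simp
  | succ n =>
    rw [coeff_X_mul, coeff_derivative]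
    push_cast
    rfl

theorem Polynomial.deriv_fun_eval {𝕜 : Type*} [NontriviallyNormedField 𝕜] (p : 𝕜[X]) :
    deriv (fun x ↦ p.eval x) = fun x ↦ (derivative p).eval x := by
  ext x
  exact p.deriv

noncomputable def centralFubiniPoly (n : ℕ) : ℝ[X] :=
  ∑ k ∈ range (n + 1), C ((k ! : ℝ) * centralT n k) * X ^ k

theorem coeff_centralFubiniPoly (n k : ℕ) :
    (centralFubiniPoly n).coeff k = k ! * centralT n k := by
  simp only [centralFubiniPoly, finsetSum_coeff, coeff_C_mul_X_pow, sum_ite_eq, mem_range]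
  split_ifs with hk
  · rfl
  · rw [centralT_eq_zero_of_lt (by omega), mul_zero]

theorem eval_centralFubiniPoly (n : ℕ) (x : ℝ) :
    (centralFubiniPoly n).eval x = centralFubini n x := by
  simp [centralFubiniPoly, centralFubini, eval_finsetSum]

theorem centralFubiniPoly_add_two (n : ℕ) :
    centralFubiniPoly (n + 2) =
      2 * X ^ 2 * centralFubiniPoly n
        + (C (1 / 4) * X + 4 * X ^ 3) * derivative (centralFubiniPoly n)
        + (C (1 / 4) * X ^ 2 + X ^ 4) * derivative (derivative (centralFubiniPoly n)) := by
  set p := centralFubiniPoly n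
  have h_euler : 2 * X ^ 2 * p + (C (1 / 4) * X + 4 * X ^ 3) * derivative p
        + (C (1 / 4) * X ^ 2 + X ^ 4) * derivative (derivative p) =
      C (1 / 4) * (X * derivative (X * derivative p)) + X * derivative (X * derivative (X ^ 2 * p))
        - X * derivative (X ^ 2 * p) := by
    simp only [derivative_add, derivative_mul, derivative_X, derivative_X_pow, derivative_ofNat,
      Nat.cast_ofNat, Nat.add_one_sub_one, pow_one, C_ofNat]
    ring
  rw [h_euler]
  ext k
  simp only [coeff_add, coeff_sub, coeff_C_mul, coeff_X_mul_derivative, coeff_X_pow_mul', p,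
    coeff_centralFubiniPoly]
  rcases k with _ | _ | k
  · simp [centralT_succ_zero]
  · simp [centralT_add_two_one]
    ring
  · simp only [show 2 ≤ k + 2 by omega, if_true, factorial_mul_centralT_add_two]
    push_cast
    ring

theorem central_fubini_second_order_recurrence (n : ℕ) (hn : 2 ≤ n) (x : ℝ) :
    centralFubini n x =
      2 * x ^ 2 * centralFubini (n - 2) x +
      (x / 4 + 4 * x ^ 3) * deriv (fun y : ℝ => centralFubini (n - 2) y) x +
      (x ^ 2 / 4 + x ^ 4) * deriv (deriv (fun y : ℝ => centralFubini (n - 2) y)) x := by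
  obtain ⟨m, rfl⟩ := Nat.exists_eq_add_of_le' hn
  simp only [Nat.add_sub_cancel, ← eval_centralFubiniPoly, deriv_fun_eval,
    centralFubiniPoly_add_two, eval_add, eval_mul, eval_pow, eval_X, eval_C, eval_ofNat]
  ring
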